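/- arXiv:1001.1208 — 3 statements merged into one kernel-verified Lean document; each statement's English description precedes it below -/
import Mathlib

section
/- Let X ⊆ ℝⁿ be a convex cone with dual cone X* := {u ∈ ℝⁿ : ⟨u,x⟩ ≥ 0 for all x ∈ X}, let ω : ℝⁿ → ℝᵐ be continuous, let y ∈ ℝᵐ, and let x be a point of the interior of X with ω(x) < y componentwise and 0 < ∫_{X*} e^{−⟨x,μ⟩} dμ < ∞. Set Z := ℝᵐ₊ and Δ(x) := ln ∫_{X*} e^{−⟨x,μ⟩} dμ. Then: (i) sup_{(λ,μ) ∈ Z × X*} (⟨λ, ω(x) − y⟩ − ⟨μ, x⟩) = 0; (ii) for every p ∈ ℕ, (1/p)·ln ∫_{Z × X*} e^{p(⟨λ, ω(x)−y⟩ − ⟨μ,x⟩)} d(λ,μ) = (1/p)·[Δ(x) − Σ_{j=1}^m ln(y − ω(x))_j − (m+n)·ln p]; and (iii) consequently lim_{p→∞} (1/p)·ln ∫_{Z × X*} e^{p(⟨λ, ω(x)−y⟩ − ⟨μ,x⟩)} d(λ,μ) = 0 = lim_{p→∞} (1/p)·[Δ(x) − Σ_{j=1}^m ln(y − ω(x))_j].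 -/
/-!
The objective `⟨λ, ω(x) - y⟩ - ⟨μ, x⟩` is nonpositive on `ℝᵐ₊ × X*` (as `ω(x) < y` and `x ∈ X`)
and vanishes at the origin, which gives (i). The exponential of `p` times it splits as a product,
so its integral is the product of `m` one-dimensional integrals `∫₀^∞ e^{-p (y - ω(x))ⱼ t} dt`
and of `∫_{X*} e^{-p ⟨x, μ⟩} dμ`; since `X*` is a cone, the substitution `μ ↦ μ / p` turns the
latter into `p⁻ⁿ e^{Δ(x)}`. Taking logarithms gives (ii), and (iii) follows from `ln p / p → 0`.
-/

open MeasureTheory Pointwise Filter Topology Real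

def dualCone {ι : Type*} [Fintype ι] (X : Set (ι → ℝ)) : Set (ι → ℝ) :=
  {u | ∀ v ∈ X, 0 ≤ ∑ i, u i * v i}

section Integrals

variable {ι κ : Type*} [Fintype ι] [Fintype κ]

theorem smul_dualCone (X : Set (ι → ℝ)) {c : ℝ} (hc : 0 < c) : c • dualCone X = dualCone X := by
  ext u
  simp [dualCone, Set.mem_smul_set_iff_inv_smul_mem₀ hc.ne', mul_assoc, ← Finset.mul_sum, hc]

theorem setIntegral_dualCone_exp_neg_mul (X : Set (ι → ℝ)) (x : ι → ℝ) {c : ℝ} (hc : 0 < c) :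
    ∫ u in dualCone X, exp (-(c * ∑ i, u i * x i)) =
      (c ^ Fintype.card ι)⁻¹ * ∫ u in dualCone X, exp (-(∑ i, x i * u i)) := by
  have h := Measure.setIntegral_comp_smul_of_pos volume
    (fun u : ι → ℝ => exp (-(∑ i, x i * u i))) (dualCone X) hc
  rw [smul_dualCone X hc, Module.finrank_fintype_fun_eq_card, smul_eq_mul] at h
  rw [← h]
  simp [Finset.mul_sum, mul_left_comm, mul_comm]

theorem integral_Ioi_zero_exp_mul {a : ℝ} (ha : a < 0) : ∫ t in Set.Ioi 0, exp (a * t) = -a⁻¹ := by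
  simp [integral_exp_mul_Ioi ha, neg_div]

theorem setIntegral_univ_pi_prod {E : ι → Type*} [∀ i, MeasureSpace (E i)]
    [∀ i, SigmaFinite (volume : Measure (E i))] (s : (i : ι) → Set (E i))
    (f : (i : ι) → E i → ℝ) :
    ∫ x in Set.univ.pi s, ∏ i, f i (x i) = ∏ i, ∫ t in s i, f i t := by
  rw [volume_pi, Measure.restrict_pi_pi, integral_fintype_prod_eq_prod]

theorem setIntegral_Ici_exp_sum_mul {a : ι → ℝ} (ha : ∀ j, a j < 0) :
    ∫ l in Set.Ici (0 : ι → ℝ), exp (∑ j, l j * a j) = ∏ j, -(a j)⁻¹ := by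
  rw [← Set.pi_univ_Ici]
  simp_rw [Pi.zero_apply, exp_sum]
  rw [setIntegral_univ_pi_prod (fun _ => Set.Ici 0) fun j t => exp (t * a j)]
  simp_rw [integral_Ici_eq_integral_Ioi, mul_comm _ (a _)]
  exact Finset.prod_congr rfl fun j _ => integral_Ioi_zero_exp_mul (ha j)

theorem setIntegral_Ici_prod_dualCone_exp {a : ι → ℝ} (ha : ∀ j, a j < 0) (X : Set (κ → ℝ))
    (x : κ → ℝ) {c : ℝ} (hc : 0 < c) :
    ∫ q in Set.Ici (0 : ι → ℝ) ×ˢ dualCone X, exp (c * ((∑ j, q.1 j * a j) - ∑ i, q.2 i * x i)) =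
      (∏ j, -(c * a j)⁻¹) *
        ((c ^ Fintype.card κ)⁻¹ * ∫ u in dualCone X, exp (-(∑ i, x i * u i))) := by
  have hsplit : ∀ q : (ι → ℝ) × (κ → ℝ), exp (c * ((∑ j, q.1 j * a j) - ∑ i, q.2 i * x i)) =
      exp (∑ j, q.1 j * (c * a j)) * exp (-(c * ∑ i, q.2 i * x i)) := by
    intro q
    rw [← exp_add, mul_sub, sub_eq_add_neg, Finset.mul_sum]
    congr 2
    exact Finset.sum_congr rfl fun j _ => by ring
  simp_rw [hsplit]
  rw [Measure.volume_eq_prod, setIntegral_prod_mul (fun l : ι → ℝ => exp (∑ j, l j * (c * a j)))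
      (fun u : κ → ℝ => exp (-(c * ∑ i, u i * x i))),
    setIntegral_Ici_exp_sum_mul fun j => mul_neg_of_pos_of_neg hc (ha j),
    setIntegral_dualCone_exp_neg_mul X x hc]

theorem log_prod_neg_inv_mul_inv_pow_mul {a : ι → ℝ} (ha : ∀ j, a j < 0) {c A : ℝ} (hc : 0 < c)
    (hA : 0 < A) (k : ℕ) :
    log ((∏ j, -(c * a j)⁻¹) * ((c ^ k)⁻¹ * A)) =
      log A - ∑ j, log (-a j) - (Fintype.card ι + k) * log c := by
  have hfactor : ∀ j, -(c * a j)⁻¹ = (c * -a j)⁻¹ := fun j => by rw [mul_neg, inv_neg]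
  have hfactor_pos : ∀ j, 0 < (c * -a j)⁻¹ := fun j => inv_pos.2 (mul_pos hc (neg_pos.2 (ha j)))
  simp_rw [hfactor]
  rw [log_mul (Finset.prod_pos fun j _ => hfactor_pos j).ne' (by positivity),
    log_prod fun j _ => (hfactor_pos j).ne', log_mul (by positivity) hA.ne', log_inv, log_pow]
  simp_rw [log_inv, log_mul hc.ne' (neg_pos.2 (ha _)).ne']
  simp only [Finset.sum_neg_distrib, Finset.sum_add_distrib, Finset.sum_const, Finset.card_univ,
    nsmul_eq_mul]
  ring

end Integrals

theorem iSup₂_iSup₂_coe_eq_of_forall_le_of_eq {α β : Type*} {s : Set α} {t : Set β}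
    {f : α → β → ℝ} {r : ℝ} (hf : ∀ a ∈ s, ∀ b ∈ t, f a b ≤ r) {a₀ : α} {b₀ : β}
    (ha₀ : a₀ ∈ s) (hb₀ : b₀ ∈ t) (hr : f a₀ b₀ = r) :
    ⨆ a ∈ s, ⨆ b ∈ t, (f a b : EReal) = r :=
  le_antisymm (iSup₂_le fun a ha => iSup₂_le fun b hb => EReal.coe_le_coe_iff.2 (hf a ha b hb))
    (le_iSup₂_of_le a₀ ha₀ (le_iSup₂_of_le b₀ hb₀ (EReal.coe_le_coe_iff.2 hr.ge)))

theorem tendsto_one_div_natCast_mul_sub_mul_log (a b : ℝ) :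
    Tendsto (fun p : ℕ => 1 / (p : ℝ) * (a - b * log p)) atTop (𝓝 0) := by
  have hlog : Tendsto (fun p : ℕ => log p / p) atTop (𝓝 0) :=
    isLittleO_log_id_atTop.tendsto_div_nhds_zero.comp tendsto_natCast_atTop_atTop
  have h := (tendsto_one_div_atTop_nhds_zero_nat.mul_const a).sub (hlog.const_mul b)
  simp only [zero_mul, mul_zero, sub_zero] at h
  refine h.congr fun p => ?_
  ring

theorem lbf_laplace_approx_general (n m : ℕ) (X : Set (Fin n → ℝ))
    (ω : (Fin n → ℝ) → (Fin m → ℝ))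
    (y : Fin m → ℝ) (x : Fin n → ℝ) (hx : x ∈ interior X)
    (hxy : ∀ j, ω x j < y j)
    (Xstar : Set (Fin n → ℝ))
    (hXstar : Xstar = {u | ∀ v ∈ X, 0 ≤ ∑ i, u i * v i})
    (Z : Set (Fin m → ℝ)) (hZ : Z = {l | 0 ≤ l})
    (hpos : 0 < ∫ μ in Xstar, Real.exp (-(∑ i, x i * μ i)))
    (Δ : ℝ) (hΔ : Δ = Real.log (∫ μ in Xstar, Real.exp (-(∑ i, x i * μ i)))) :
    (⨆ l ∈ Z, ⨆ μ ∈ Xstar,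
        (((∑ j, l j * (ω x j - y j)) - ∑ i, μ i * x i : ℝ) : EReal)) = 0 ∧
    (∀ p : ℕ, 1 ≤ p →
      (1 / (p : ℝ)) * Real.log (∫ q in Z ×ˢ Xstar,
          Real.exp ((p : ℝ) * ((∑ j, q.1 j * (ω x j - y j)) - ∑ i, q.2 i * x i))) =
        (1 / (p : ℝ)) * (Δ - (∑ j, Real.log (y j - ω x j)) - (m + n) * Real.log p)) ∧
    Tendsto (fun p : ℕ => (1 / (p : ℝ)) * Real.log (∫ q in Z ×ˢ Xstar,
          Real.exp ((p : ℝ) * ((∑ j, q.1 j * (ω x j - y j)) - ∑ i, q.2 i * x i))))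
      atTop (𝓝 0) ∧
    Tendsto (fun p : ℕ => (1 / (p : ℝ)) * (Δ - ∑ j, Real.log (y j - ω x j)))
      atTop (𝓝 0) := by
  obtain rfl : Xstar = dualCone X := hXstar
  obtain rfl : Z = Set.Ici 0 := hZ
  have hωy : ∀ j, ω x j - y j < 0 := fun j => sub_neg.2 (hxy j)
  have hlog_integral : ∀ p : ℕ, 1 ≤ p →
      1 / (p : ℝ) * log (∫ q in Set.Ici (0 : Fin m → ℝ) ×ˢ dualCone X,
          exp (p * ((∑ j, q.1 j * (ω x j - y j)) - ∑ i, q.2 i * x i))) =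
        1 / (p : ℝ) * (Δ - (∑ j, log (y j - ω x j)) - (m + n) * log p) := by
    intro p hp
    have hp_pos : (0 : ℝ) < p := by exact_mod_cast hp
    rw [setIntegral_Ici_prod_dualCone_exp hωy X x hp_pos,
      log_prod_neg_inv_mul_inv_pow_mul hωy hp_pos hpos, hΔ]
    simp only [neg_sub, Fintype.card_fin]
  refine ⟨?_, hlog_integral, ?_, ?_⟩
  · refine iSup₂_iSup₂_coe_eq_of_forall_le_of_eq (a₀ := 0) (b₀ := 0) (fun l hl u hu => ?_)
      Set.self_mem_Ici (by simp [dualCone]) (by simp)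
    have hdual : 0 ≤ ∑ i, u i * x i := hu x (interior_subset hx)
    have hpenalty : ∑ j, l j * (ω x j - y j) ≤ 0 :=
      Finset.sum_nonpos fun j _ => mul_nonpos_of_nonneg_of_nonpos (hl j) (hωy j).le
    linarith
  · refine (tendsto_one_div_natCast_mul_sub_mul_log
      (Δ - ∑ j, log (y j - ω x j)) ((m : ℝ) + n)).congr' ?_
    filter_upwards [eventually_ge_atTop 1] with p hp
    exact (hlog_integral p hp).symm
  · simpa using tendsto_one_div_natCast_mul_sub_mul_log (Δ - ∑ j, log (y j - ω x j)) 0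

/-- For a convex cone `X ⊆ ℝⁿ` with dual cone `X*`, a continuous
`ω : ℝⁿ → ℝᵐ`, `y ∈ ℝᵐ`, and `x ∈ int X` with `ω(x) < y` componentwise and
`0 < ∫_{X*} e^{-⟨x,μ⟩} dμ < ∞`, setting `Z := ℝᵐ₊` and `Δ(x) := ln ∫_{X*} e^{-⟨x,μ⟩} dμ`:
(i) `sup_{(λ,μ) ∈ Z × X*} (⟨λ, ω(x)-y⟩ - ⟨μ,x⟩) = 0`;
(ii) for every `p ∈ ℕ`, `p ≥ 1`,
`(1/p) ln ∫_{Z × X*} e^{p(⟨λ,ω(x)-y⟩-⟨μ,x⟩)} = (1/p)(Δ(x) - Σⱼ ln(y-ω(x))ⱼ - (m+n) ln p)`;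
(iii) both sequences tend to `0` as `p → ∞`. -/
theorem lbf_laplace_approx (n m : ℕ) (X : Set (Fin n → ℝ))
    (hXconv : Convex ℝ X) (hXcone : ∀ t : ℝ, 0 < t → t • X = X)
    (ω : (Fin n → ℝ) → (Fin m → ℝ)) (hω : Continuous ω)
    (y : Fin m → ℝ) (x : Fin n → ℝ) (hx : x ∈ interior X)
    (hxy : ∀ j, ω x j < y j)
    (Xstar : Set (Fin n → ℝ))
    (hXstar : Xstar = {u | ∀ v ∈ X, 0 ≤ ∑ i, u i * v i})
    (Z : Set (Fin m → ℝ)) (hZ : Z = {l | 0 ≤ l})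
    (hint : IntegrableOn (fun μ => Real.exp (-(∑ i, x i * μ i))) Xstar volume)
    (hpos : 0 < ∫ μ in Xstar, Real.exp (-(∑ i, x i * μ i)))
    (Δ : ℝ) (hΔ : Δ = Real.log (∫ μ in Xstar, Real.exp (-(∑ i, x i * μ i)))) :
    (⨆ l ∈ Z, ⨆ μ ∈ Xstar,
        (((∑ j, l j * (ω x j - y j)) - ∑ i, μ i * x i : ℝ) : EReal)) = 0 ∧
    (∀ p : ℕ, 1 ≤ p →
      (1 / (p : ℝ)) * Real.log (∫ q in Z ×ˢ Xstar,
          Real.exp ((p : ℝ) * ((∑ j, q.1 j * (ω x j - y j)) - ∑ i, q.2 i * x i))) =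
        (1 / (p : ℝ)) * (Δ - (∑ j, Real.log (y j - ω x j)) - (m + n) * Real.log p)) ∧
    Tendsto (fun p : ℕ => (1 / (p : ℝ)) * Real.log (∫ q in Z ×ˢ Xstar,
          Real.exp ((p : ℝ) * ((∑ j, q.1 j * (ω x j - y j)) - ∑ i, q.2 i * x i))))
      atTop (𝓝 0) ∧
    Tendsto (fun p : ℕ => (1 / (p : ℝ)) * (Δ - ∑ j, Real.log (y j - ω x j)))
      atTop (𝓝 0) :=
  lbf_laplace_approx_general n m X ω y x hx hxy Xstar hXstar Z hZ hpos Δ hΔ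
end

section
/- Let X ⊆ ℝⁿ be a Lebesgue-measurable set, f : ℝⁿ → ℝ and ω : ℝⁿ → ℝᵐ measurable, y ∈ ℝᵐ, λ ∈ ℝᵐ with λ_j > 0 for all j, and p ≥ 1. Let Θ(y) := {(x,z) ∈ X × ℝᵐ₊ : ω(x) + z ≤ y}. Then, with values in [0, ∞], (∫_{Θ(y)} e^{p f(x)} d(x,z))^{1/p} ≤ e^{⟨λ,y⟩} · (∫_X e^{p(f(x) − ⟨λ,ω(x)⟩)} dx)^{1/p} · Π_{j=1}^m (p·λ_j)^{−1/p}. -/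
open MeasureTheory
open scoped ENNReal

private noncomputable def oneD (c t : ℝ) : ℝ≥0∞ :=
  if 0 ≤ t then ENNReal.ofReal (Real.exp (-(c * t))) else 0

private lemma oneD_measurable (c : ℝ) : Measurable (oneD c) := by
  unfold oneD
  exact Measurable.ite measurableSet_Ici
    ((Real.measurable_exp.comp ((measurable_const.mul measurable_id).neg)).ennreal_ofReal)
    measurable_const

private lemma oneD_lintegral {c : ℝ} (hc : 0 < c) :
    ∫⁻ t : ℝ, oneD c t = (ENNReal.ofReal c)⁻¹ := by
  have h : ∀ t : ℝ, ProbabilityTheory.exponentialPDF c t = ENNReal.ofReal c * oneD c t := by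
    intro t
    rw [ProbabilityTheory.exponentialPDF_eq, oneD]
    split_ifs with h
    · rw [ENNReal.ofReal_mul hc.le]
    · simp
  have h1 := ProbabilityTheory.lintegral_exponentialPDF_eq_one hc
  simp_rw [h] at h1
  rw [lintegral_const_mul _ (oneD_measurable c)] at h1
  have hc0 : ENNReal.ofReal c ≠ 0 := by simp [hc]
  have hct : ENNReal.ofReal c ≠ ⊤ := ENNReal.ofReal_ne_top
  exact ENNReal.eq_inv_of_mul_eq_one_left (by rwa [mul_comm] at h1)

private lemma lintegral_fin_prod :
    ∀ (m : ℕ) (g : Fin m → ℝ → ℝ≥0∞), (∀ j, Measurable (g j)) →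
    ∫⁻ z : Fin m → ℝ, ∏ j, g j (z j) = ∏ j, ∫⁻ t, g j t := by
  intro m
  induction m with
  | zero =>
    intro g hg
    simp [lintegral_const, volume_pi]
  | succ k ih =>
    intro g hg
    rw [volume_pi, ← ((measurePreserving_piFinSuccAbove
        (fun _ : Fin (k + 1) => (volume : Measure ℝ)) 0).symm).lintegral_comp_emb
        (MeasurableEquiv.measurableEmbedding _)]
    simp_rw [MeasurableEquiv.piFinSuccAbove_symm_apply, Fin.insertNthEquiv, Equiv.coe_fn_mk,
      Fin.insertNth_zero, Fin.prod_univ_succ, Fin.cons_zero, Fin.cons_succ]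
    simp only [Fin.zero_succAbove, cast_eq]
    rw [lintegral_prod_mul (f := g 0) (g := fun z : Fin k → ℝ => ∏ x : Fin k, g x.succ (z x))
      (hg 0).aemeasurable (Finset.measurable_prod Finset.univ fun j _ =>
        (hg j.succ).comp (measurable_pi_apply j)).aemeasurable, ← volume_pi,
      ih (fun j => g j.succ) (fun j => hg j.succ)]

/-- With `Θ(y) = {(x,z) ∈ X × ℝᵐ₊ : ω(x) + z ≤ y}` and `λ > 0`,
for `p ≥ 1` one has, in `[0,∞]`,
`(∫_{Θ(y)} e^{pf(x)})^{1/p} ≤ e^{⟨λ,y⟩} (∫_X e^{p(f-⟨λ,ω⟩)})^{1/p} Πⱼ (pλⱼ)^{-1/p}`. -/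
theorem theta_lp_bound (n m : ℕ) (X : Set (Fin n → ℝ)) (hX : MeasurableSet X)
    (f : (Fin n → ℝ) → ℝ) (hf : Measurable f)
    (ω : (Fin n → ℝ) → (Fin m → ℝ)) (hω : Measurable ω)
    (y l : Fin m → ℝ) (hl : ∀ j, 0 < l j)
    (p : ℝ) (hp : 1 ≤ p) :
    (∫⁻ q in {q : (Fin n → ℝ) × (Fin m → ℝ) |
        q.1 ∈ X ∧ 0 ≤ q.2 ∧ ∀ j, ω q.1 j + q.2 j ≤ y j},
        ENNReal.ofReal (Real.exp (p * f q.1))) ^ (1 / p) ≤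
      ENNReal.ofReal (Real.exp (∑ j, l j * y j)) *
        (∫⁻ x in X,
          ENNReal.ofReal (Real.exp (p * (f x - ∑ j, l j * ω x j)))) ^ (1 / p) *
        ∏ j, ENNReal.ofReal ((p * l j) ^ (-(1 / p))) := by
  have hp0 : 0 < p := lt_of_lt_of_le one_pos hp
  have h1p : (0 : ℝ) ≤ 1 / p := by positivity
  set C : ℝ≥0∞ := ENNReal.ofReal (Real.exp (p * ∑ j, l j * y j)) with hC
  set A : (Fin n → ℝ) → ℝ≥0∞ :=
    fun x => ENNReal.ofReal (Real.exp (p * (f x - ∑ j, l j * ω x j))) with hA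
  set B : (Fin m → ℝ) → ℝ≥0∞ := fun z => ∏ j, oneD (p * l j) (z j) with hB
  have hAmeas : Measurable A := by
    apply Measurable.ennreal_ofReal
    apply Real.measurable_exp.comp
    exact measurable_const.mul (hf.sub (Finset.measurable_sum Finset.univ fun j _ =>
      measurable_const.mul ((measurable_pi_apply j).comp hω)))
  have hBmeas : Measurable B :=
    Finset.measurable_prod _ fun j _ => (oneD_measurable (p * l j)).comp (measurable_pi_apply j)
  have key : (∫⁻ q in {q : (Fin n → ℝ) × (Fin m → ℝ) |
        q.1 ∈ X ∧ 0 ≤ q.2 ∧ ∀ j, ω q.1 j + q.2 j ≤ y j},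
        ENNReal.ofReal (Real.exp (p * f q.1))) ≤
      C * (∫⁻ x in X, A x) * ∏ j, (ENNReal.ofReal (p * l j))⁻¹ := by
    calc (∫⁻ q in {q : (Fin n → ℝ) × (Fin m → ℝ) |
            q.1 ∈ X ∧ 0 ≤ q.2 ∧ ∀ j, ω q.1 j + q.2 j ≤ y j},
            ENNReal.ofReal (Real.exp (p * f q.1)))
        ≤ ∫⁻ q in {q : (Fin n → ℝ) × (Fin m → ℝ) |
            q.1 ∈ X ∧ 0 ≤ q.2 ∧ ∀ j, ω q.1 j + q.2 j ≤ y j},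
            (C * A q.1) * B q.2 := by
          apply setLIntegral_mono (g := fun q : (Fin n → ℝ) × (Fin m → ℝ) => (C * A q.1) * B q.2)
            ((measurable_const.mul (hAmeas.comp measurable_fst)).mul (hBmeas.comp measurable_snd))
          rintro q ⟨hqX, hq0, hqle⟩
          have hBq : B q.2 = ENNReal.ofReal (Real.exp (∑ j, -(p * l j * q.2 j))) := by
            calc B q.2 = ∏ j, ENNReal.ofReal (Real.exp (-(p * l j * q.2 j))) :=
                  Finset.prod_congr rfl fun j _ => by simp only [oneD]; rw [if_pos (show (0:ℝ) ≤ q.2 j from hq0 j)]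
              _ = ENNReal.ofReal (∏ j, Real.exp (-(p * l j * q.2 j))) :=
                  (ENNReal.ofReal_prod_of_nonneg fun j _ => (Real.exp_pos _).le).symm
              _ = ENNReal.ofReal (Real.exp (∑ j, -(p * l j * q.2 j))) := by rw [Real.exp_sum]
          rw [hBq, hC, hA, ← ENNReal.ofReal_mul (Real.exp_pos _).le,
            ← ENNReal.ofReal_mul (mul_nonneg (Real.exp_pos _).le (Real.exp_pos _).le),
            ← Real.exp_add, ← Real.exp_add]
          apply ENNReal.ofReal_le_ofReal
          apply Real.exp_le_exp.2
          have hsum : ∑ j, (l j * ω q.1 j + l j * q.2 j) ≤ ∑ j, l j * y j :=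
            Finset.sum_le_sum fun j _ => by
              rw [← mul_add]; exact mul_le_mul_of_nonneg_left (hqle j) (hl j).le
          rw [Finset.sum_add_distrib] at hsum
          have h2 : ∑ j, -(p * l j * q.2 j) = -(p * ∑ j, l j * q.2 j) := by
            rw [Finset.sum_neg_distrib]
            simp_rw [mul_assoc]
            rw [← Finset.mul_sum]
          rw [h2]
          nlinarith [mul_le_mul_of_nonneg_left hsum hp0.le]
      _ ≤ ∫⁻ q in X ×ˢ (Set.univ : Set (Fin m → ℝ)), (C * A q.1) * B q.2 :=
          lintegral_mono_set fun q hq => ⟨hq.1, trivial⟩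
      _ = ∫⁻ q, (C * A q.1) * B q.2 ∂((volume.restrict X).prod volume) := by
          rw [Measure.volume_eq_prod, ← Measure.restrict_prod_eq_prod_univ]
      _ = (∫⁻ x in X, C * A x) * ∫⁻ z, B z :=
          lintegral_prod_mul (measurable_const.mul hAmeas).aemeasurable hBmeas.aemeasurable
      _ = C * (∫⁻ x in X, A x) * ∏ j, (ENNReal.ofReal (p * l j))⁻¹ := by
          rw [lintegral_const_mul C hAmeas, hB,
            lintegral_fin_prod m (fun j t => oneD (p * l j) t) (fun j => oneD_measurable _)]
          congr 1
          exact Finset.prod_congr rfl fun j _ => oneD_lintegral (mul_pos hp0 (hl j))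
  refine le_trans (ENNReal.rpow_le_rpow key h1p) ?_
  rw [ENNReal.mul_rpow_of_nonneg _ _ h1p, ENNReal.mul_rpow_of_nonneg _ _ h1p,
    ← ENNReal.prod_rpow_of_nonneg h1p]
  have e1 : C ^ (1 / p) = ENNReal.ofReal (Real.exp (∑ j, l j * y j)) := by
    rw [hC, ENNReal.ofReal_rpow_of_pos (Real.exp_pos _), ← Real.exp_mul, mul_one_div,
      mul_div_cancel_left₀ _ hp0.ne']
  have e3 : ∀ j : Fin m, ((ENNReal.ofReal (p * l j))⁻¹) ^ (1 / p)
      = ENNReal.ofReal ((p * l j) ^ (-(1 / p))) := by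
    intro j
    have hc : 0 < p * l j := mul_pos hp0 (hl j)
    rw [ENNReal.inv_rpow, ENNReal.ofReal_rpow_of_pos hc,
      ← ENNReal.ofReal_inv_of_pos (Real.rpow_pos_of_pos hc _), ← Real.rpow_neg hc.le]
  rw [e1, Finset.prod_congr rfl fun j _ => e3 j]
end

section
/- Let X ⊆ ℝⁿ be a nonempty convex cone, f : ℝⁿ → ℝ and ω : ℝⁿ → ℝᵐ continuous, g(y) := sup{f(x) : x ∈ X, ω(x) ≤ y}, g*(λ) := inf_{y∈ℝᵐ}(⟨λ,y⟩ − g(y)), and D := {λ ∈ ℝᵐ : λ ≥ 0 and sup_{x∈X}(f(x) − ⟨λ,ω(x)⟩) < ∞} with nonempty relative interior ri D. If g is concave, upper semi-continuous, and bounded from above by some affine function, then strong duality holds: for every y ∈ ℝᵐ, inf_{λ ∈ ri D} ( ⟨λ,y⟩ − g*(λ) ) = inf_{λ ∈ D} ( ⟨λ,y⟩ − g*(λ) ) = g(y). -/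
open Pointwise

private lemma hlp_le_sub (κ β : ℝ) (G : EReal) :
    ((β : ℝ) : EReal) ≤ ((κ : ℝ) : EReal) - G ↔ G ≤ ((κ - β : ℝ) : EReal) := by
  induction G using EReal.rec with
  | bot => simp [EReal.coe_sub_bot]
  | coe x =>
      rw [← EReal.coe_sub, EReal.coe_le_coe_iff, EReal.coe_le_coe_iff]
      constructor <;> intro h <;> linarith
  | top =>
      constructor
      · intro h
        exact absurd (le_bot_iff.mp (by rwa [EReal.sub_top] at h)) (EReal.coe_ne_bot β)
      · intro h
        exact absurd (top_le_iff.mp h) (EReal.coe_ne_top _)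

private lemma hlp_sub_le (κ c : ℝ) (G : EReal) (h : ((κ - c : ℝ) : EReal) ≤ G) :
    ((κ : ℝ) : EReal) - G ≤ ((c : ℝ) : EReal) := by
  induction G using EReal.rec with
  | bot => exact absurd (le_bot_iff.mp h) (EReal.coe_ne_bot _)
  | coe x =>
      rw [← EReal.coe_sub, EReal.coe_le_coe_iff]
      rw [EReal.coe_le_coe_iff] at h; linarith
  | top => simp [EReal.sub_top]

private lemma hlp_weak (κ : ℝ) (A B : EReal) (hA : A ≠ ⊤) (h : B ≤ ((κ : ℝ) : EReal) - A) :
    A ≤ ((κ : ℝ) : EReal) - B := by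
  induction A using EReal.rec with
  | bot => exact bot_le
  | coe a =>
      induction B using EReal.rec with
      | bot => simp [EReal.coe_sub_bot]
      | coe b =>
          rw [← EReal.coe_sub, EReal.coe_le_coe_iff] at h ⊢; linarith
      | top =>
          exact absurd (top_le_iff.mp h)
            (by rw [← EReal.coe_sub]; exact EReal.coe_ne_top _)
  | top => exact absurd rfl hA

private lemma hlp_real (r : ℝ) (G : EReal) (h1 : ((r : ℝ) : EReal) ≤ G) (h2 : G ≠ ⊤) :
    ∃ s : ℝ, G = ((s : ℝ) : EReal) := by
  induction G using EReal.rec with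
  | bot => exact absurd h1 (by simp)
  | coe x => exact ⟨x, rfl⟩
  | top => exact absurd rfl h2

private lemma hlp_eps (a : EReal) (x : ℝ) (h : ∀ ε : ℝ, 0 < ε → a ≤ ((x + ε : ℝ) : EReal)) :
    a ≤ ((x : ℝ) : EReal) := by
  refine le_of_forall_gt_imp_ge_of_dense fun c hc => ?_
  induction c using EReal.rec with
  | bot => exact absurd hc (by simp)
  | coe c =>
      rw [EReal.coe_lt_coe_iff] at hc
      have := h (c - x) (by linarith)
      simpa [add_sub_cancel] using this
  | top => exact le_top

private lemma hlp_comb' (G : EReal) (A B t : ℝ) (h0 : 0 ≤ t) (h1 : t ≤ 1)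
    (hA : G ≤ ((A : ℝ) : EReal)) (hB : G ≤ ((B : ℝ) : EReal)) (hGt : G ≠ ⊤) :
    G ≤ ((t * A + (1 - t) * B : ℝ) : EReal) := by
  induction G using EReal.rec with
  | bot => exact bot_le
  | coe r =>
      rw [EReal.coe_le_coe_iff] at hA hB ⊢
      nlinarith
  | top => exact absurd rfl hGt

private lemma seg_ri {N : ℕ} {s : Set (Fin N → ℝ)} (hs : Convex ℝ s)
    {x w : Fin N → ℝ} (hx : x ∈ s) (hw : w ∈ intrinsicInterior ℝ s)
    {t : ℝ} (ht : 0 < t) (ht1 : t ≤ 1) :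
    t • w + (1 - t) • x ∈ intrinsicInterior ℝ s := by
  obtain ⟨w', hw', hww⟩ := hw
  have hxA : x ∈ affineSpan ℝ s := subset_affineSpan ℝ s hx
  have hmem : t • w + (1 - t) • x ∈ affineSpan ℝ s := by
    have h2 := (affineSpan ℝ s).smul_vsub_vadd_mem t w'.2 hxA hxA
    have he : t • ((w' : Fin N → ℝ) -ᵥ x) +ᵥ x = t • w + (1 - t) • x := by
      rw [hww]
      simp only [vsub_eq_sub, vadd_eq_add, smul_sub, sub_smul, one_smul]
      abel
    rwa [he] at h2
  have hinvmem : ∀ p : affineSpan ℝ s, t⁻¹ • ((p : Fin N → ℝ) - x) + x ∈ affineSpan ℝ s := by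
    intro p
    have h3 := (affineSpan ℝ s).smul_vsub_vadd_mem t⁻¹ p.2 hxA hxA
    simpa [vsub_eq_sub, vadd_eq_add] using h3
  set Tinv : affineSpan ℝ s → affineSpan ℝ s :=
    fun p => ⟨t⁻¹ • ((p : Fin N → ℝ) - x) + x, hinvmem p⟩ with hTinv
  have hcont : Continuous Tinv := by
    apply Continuous.subtype_mk
    fun_prop
  have hopen : IsOpen (Tinv ⁻¹' (interior ((↑) ⁻¹' s : Set (affineSpan ℝ s)))) :=
    isOpen_interior.preimage hcont
  have hq : Tinv ⟨t • w + (1 - t) • x, hmem⟩ = w' := by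
    apply Subtype.ext
    show t⁻¹ • (t • w + (1 - t) • x - x) + x = (w' : Fin N → ℝ)
    rw [← hww]
    have h4 : t • (w' : Fin N → ℝ) + (1 - t) • x - x = t • ((w' : Fin N → ℝ) - x) := by
      rw [smul_sub, sub_smul, one_smul]; abel
    rw [h4, smul_smul, inv_mul_cancel₀ ht.ne', one_smul, sub_add_cancel]
  have hsub : Tinv ⁻¹' (interior ((↑) ⁻¹' s : Set (affineSpan ℝ s)))
      ⊆ ((↑) ⁻¹' s : Set (affineSpan ℝ s)) := by
    intro p hp
    have hp2 : Tinv p ∈ interior ((↑) ⁻¹' s : Set (affineSpan ℝ s)) := hp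
    have hps2 : Tinv p ∈ ((↑) ⁻¹' s : Set (affineSpan ℝ s)) :=
      interior_subset (s := ((↑) ⁻¹' s : Set (affineSpan ℝ s))) hp2
    have hps : (Tinv p : Fin N → ℝ) ∈ s := hps2
    have h5 : t • (Tinv p : Fin N → ℝ) + (1 - t) • x = (p : Fin N → ℝ) := by
      show t • (t⁻¹ • ((p : Fin N → ℝ) - x) + x) + (1 - t) • x = (p : Fin N → ℝ)
      rw [smul_add, smul_smul, mul_inv_cancel₀ ht.ne', one_smul, sub_smul, one_smul]
      abel
    have h6 := hs hps hx ht.le (by linarith : (0:ℝ) ≤ 1 - t) (by ring)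
    rw [h5] at h6
    exact h6
  refine ⟨⟨t • w + (1 - t) • x, hmem⟩, interior_maximal hsub hopen ?_, rfl⟩
  rw [Set.mem_preimage, hq]
  exact hw'

private def IP {m : ℕ} (l z : Fin m → ℝ) : ℝ := ∑ j, l j * z j

private lemma ipdef {m : ℕ} (l z : Fin m → ℝ) : (∑ j, l j * z j) = IP l z := rfl

private lemma IP_comb {m : ℕ} (A B : ℝ) (l₁ l₂ z : Fin m → ℝ) :
    IP (A • l₁ + B • l₂) z = A * IP l₁ z + B * IP l₂ z := by
  simp only [IP, Finset.mul_sum, ← Finset.sum_add_distrib]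
  exact Finset.sum_congr rfl fun j _ => by
    simp only [Pi.add_apply, Pi.smul_apply, smul_eq_mul]; ring

private lemma IP_mono {m : ℕ} {l z₁ z₂ : Fin m → ℝ} (hl : 0 ≤ l) (h : z₁ ≤ z₂) :
    IP l z₁ ≤ IP l z₂ :=
  Finset.sum_le_sum fun j _ => mul_le_mul_of_nonneg_left (h j) (hl j)

private lemma IP_single {m : ℕ} (l z : Fin m → ℝ) (s : ℝ) (j : Fin m) :
    IP l (z + s • (Pi.single j 1 : Fin m → ℝ)) = IP l z + s * l j := by
  classical
  simp only [IP, Pi.add_apply, Pi.smul_apply, smul_eq_mul, Pi.single_apply, mul_add,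
    mul_ite, mul_one, mul_zero, Finset.sum_add_distrib, Finset.sum_ite_eq',
    Finset.mem_univ, if_true]
  ring

private lemma IP_subt {m : ℕ} (a L z : Fin m → ℝ) (tc : ℝ) :
    IP (fun j => a j - tc * L j) z = IP a z - tc * IP z L := by
  simp only [IP, Finset.mul_sum, ← Finset.sum_sub_distrib]
  exact Finset.sum_congr rfl fun j _ => by ring

private lemma IP_negdiv {m : ℕ} (L z : Fin m → ℝ) (s : ℝ) :
    IP (fun j => -L j / s) z = -IP z L / s := by
  simp only [IP]
  calc ∑ x, -L x / s * z x = ∑ x, -(z x * L x) / s :=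
        Finset.sum_congr rfl fun j _ => by ring
    _ = (∑ x, -(z x * L x)) / s := (Finset.sum_div _ _ _).symm
    _ = -(∑ x, z x * L x) / s := by rw [Finset.sum_neg_distrib]
/-- **strong duality, Corollary 2.7 of the paper.** If the value
function `g` is concave, upper semi-continuous and bounded above by an affine
function, and `ri D ≠ ∅`, then for every `y`,
`inf_{λ ∈ ri D} (⟨λ,y⟩ - g*(λ)) = inf_{λ ∈ D} (⟨λ,y⟩ - g*(λ)) = g(y)`. -/
theorem strong_duality (n m : ℕ) (X : Set (Fin n → ℝ)) (hne : X.Nonempty)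
    (hconv : Convex ℝ X) (hcone : ∀ t : ℝ, 0 < t → t • X = X)
    (f : (Fin n → ℝ) → ℝ) (hf : Continuous f)
    (ω : (Fin n → ℝ) → (Fin m → ℝ)) (hω : Continuous ω)
    (g : (Fin m → ℝ) → EReal)
    (hg : ∀ y, g y = ⨆ x ∈ {x | x ∈ X ∧ ω x ≤ y}, ((f x : ℝ) : EReal))
    (gstar : (Fin m → ℝ) → EReal)
    (hgstar : ∀ l, gstar l = ⨅ y : Fin m → ℝ, (((∑ j, l j * y j : ℝ) : EReal) - g y))
    (D : Set (Fin m → ℝ))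
    (hD : D = {l | 0 ≤ l ∧
      (⨆ x ∈ X, ((f x - ∑ j, l j * ω x j : ℝ) : EReal)) < ⊤})
    (hri : (intrinsicInterior ℝ D).Nonempty)
    (hconc : ∀ y₁ y₂ : Fin m → ℝ, ∀ t : ℝ, 0 ≤ t → t ≤ 1 →
      ((t : ℝ) : EReal) * g y₁ + ((1 - t : ℝ) : EReal) * g y₂ ≤
        g (t • y₁ + (1 - t) • y₂))
    (husc : UpperSemicontinuous g)
    (hbdd : ∃ (a : Fin m → ℝ) (b : ℝ), ∀ y, g y ≤ ((∑ j, a j * y j + b : ℝ) : EReal)) :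
    ∀ y : Fin m → ℝ,
      (⨅ l ∈ intrinsicInterior ℝ D, (((∑ j, l j * y j : ℝ) : EReal) - gstar l)) =
        (⨅ l ∈ D, (((∑ j, l j * y j : ℝ) : EReal) - gstar l)) ∧
      (⨅ l ∈ D, (((∑ j, l j * y j : ℝ) : EReal) - gstar l)) = g y := by
  classical
  intro y
  obtain ⟨x₀, hx₀⟩ := hne
  obtain ⟨a, b, hab⟩ := hbdd
  simp only [ipdef] at hgstar hD hab ⊢
  -- basic facts about g
  have hfeas : ∀ (z : Fin m → ℝ) (x : Fin n → ℝ), x ∈ X → ω x ≤ z →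
      ((f x : ℝ) : EReal) ≤ g z := by
    intro z x hxX hxw
    rw [hg z]
    exact le_iSup₂ (f := fun x _ => ((f x : ℝ) : EReal)) x ⟨hxX, hxw⟩
  have hbound : ∀ (z : Fin m → ℝ) (c : ℝ), (∀ x, x ∈ X → ω x ≤ z → f x ≤ c) →
      g z ≤ (c : EReal) := by
    intro z c h
    rw [hg z]
    exact iSup₂_le fun x hx => EReal.coe_le_coe_iff.2 (h x hx.1 hx.2)
  have hgtop : ∀ z, g z ≠ ⊤ := fun z => ((hab z).trans_lt (EReal.coe_lt_top _)).ne
  have hgbot : ∀ z, (¬ ∃ x ∈ X, ω x ≤ z) → g z = ⊥ := by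
    intro z h
    rw [hg z]
    exact le_bot_iff.mp (iSup₂_le fun x hx => (h ⟨x, hx.1, hx.2⟩).elim)
  -- basic facts about gstar
  have hgstar_le : ∀ l z, gstar l ≤ ((IP l z : ℝ) : EReal) - g z := by
    intro l z
    rw [hgstar l]
    exact iInf_le _ z
  have hgstar_ge : ∀ (l : Fin m → ℝ) (β : ℝ),
      (∀ z, g z ≤ ((IP l z - β : ℝ) : EReal)) → ((β : ℝ) : EReal) ≤ gstar l := by
    intro l β h
    rw [hgstar l]
    exact le_iInf fun z => (hlp_le_sub (IP l z) β (g z)).2 (h z)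
  have hweak : ∀ l : Fin m → ℝ, g y ≤ ((IP l y : ℝ) : EReal) - gstar l :=
    fun l => hlp_weak _ _ _ (hgtop y) (hgstar_le l y)
  -- off D the dual term is ⊤
  have htopD : ∀ l : Fin m → ℝ, l ∉ D → gstar l = ⊥ := by
    intro l hl
    rw [EReal.eq_bot_iff_forall_lt]
    intro c
    rw [hD] at hl
    simp only [Set.mem_setOf_eq, not_and] at hl
    by_cases hl0 : 0 ≤ l
    · -- sup over X is ⊤
      have hsup : (⨆ x ∈ X, ((f x - IP l (ω x) : ℝ) : EReal)) = ⊤ :=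
        top_le_iff.mp (not_lt.mp (hl hl0))
      have h1 : (((-c : ℝ)) : EReal) < ⨆ x ∈ X, ((f x - IP l (ω x) : ℝ) : EReal) := by
        rw [hsup]; exact EReal.coe_lt_top _
      rw [lt_iSup_iff] at h1
      obtain ⟨x, h2⟩ := h1
      rw [lt_iSup_iff] at h2
      obtain ⟨hxX, h3⟩ := h2
      rw [EReal.coe_lt_coe_iff] at h3
      have h4 : gstar l ≤ ((IP l (ω x) : ℝ) : EReal) - g (ω x) := hgstar_le l (ω x)
      have h5 : ((IP l (ω x) : ℝ) : EReal) - g (ω x) ≤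
          ((IP l (ω x) : ℝ) : EReal) - ((f x : ℝ) : EReal) :=
        EReal.sub_le_sub le_rfl (hfeas (ω x) x hxX le_rfl)
      have h6 : ((IP l (ω x) : ℝ) : EReal) - ((f x : ℝ) : EReal) < (c : EReal) := by
        rw [← EReal.coe_sub, EReal.coe_lt_coe_iff]
        linarith
      exact ((h4.trans h5).trans_lt h6)
    · -- some coordinate is negative
      have hj : ∃ j, l j < 0 := by
        by_contra h
        push_neg at h
        exact hl0 fun j => h j
      obtain ⟨j, hj⟩ := hj
      clear hl hl0
      set sv := max 0 ((IP l (ω x₀) - f x₀ - c + 1) / (-l j)) with hsv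
      have hsv0 : 0 ≤ sv := le_max_left _ _
      set z := ω x₀ + sv • (Pi.single j 1 : Fin m → ℝ) with hz
      have hωz : ω x₀ ≤ z := by
        intro i
        have : 0 ≤ sv * (Pi.single j 1 : Fin m → ℝ) i := by
          by_cases hij : i = j
          · subst hij; simp [Pi.single_apply, hsv0]
          · simp [Pi.single_apply, hij]
        simp only [hz, Pi.add_apply, Pi.smul_apply, smul_eq_mul]
        linarith
      have h4 : gstar l ≤ ((IP l z : ℝ) : EReal) - g z := hgstar_le l z
      have h5 : ((IP l z : ℝ) : EReal) - g z ≤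
          ((IP l z : ℝ) : EReal) - ((f x₀ : ℝ) : EReal) :=
        EReal.sub_le_sub le_rfl (hfeas z x₀ hx₀ hωz)
      have h7 : IP l z - f x₀ < c := by
        have h8 : (IP l (ω x₀) - f x₀ - c + 1) / (-l j) ≤ sv := le_max_right _ _
        have h9 := mul_le_mul_of_nonpos_right h8 hj.le
        have h10 : (IP l (ω x₀) - f x₀ - c + 1) / (-l j) * l j
            = -(IP l (ω x₀) - f x₀ - c + 1) := by
          rw [div_mul_eq_mul_div, div_eq_iff (by linarith : -l j ≠ 0)]
          ring
        rw [h10] at h9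
        have h11 : IP l z = IP l (ω x₀) + sv * l j := IP_single l (ω x₀) sv j
        linarith
      have h6 : ((IP l z : ℝ) : EReal) - ((f x₀ : ℝ) : EReal) < (c : EReal) := by
        rw [← EReal.coe_sub, EReal.coe_lt_coe_iff]
        exact h7
      exact ((h4.trans h5).trans_lt h6)
  have htermtop : ∀ l : Fin m → ℝ, l ∉ D → ((IP l y : ℝ) : EReal) - gstar l = ⊤ := by
    intro l hl
    rw [htopD l hl, EReal.coe_sub_bot]
  -- the inf over D equals the global inf
  have hIinf : (⨅ l ∈ D, (((IP l y : ℝ) : EReal) - gstar l))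
      = ⨅ l : Fin m → ℝ, (((IP l y : ℝ) : EReal) - gstar l) := by
    apply le_antisymm
    · refine le_iInf fun l => ?_
      by_cases hl : l ∈ D
      · exact iInf₂_le l hl
      · rw [htermtop l hl]; exact le_top
    · exact le_iInf₂ fun l _ => iInf_le _ l
  -- separation
  have hsep : ∀ c : ℝ, g y < (c : EReal) →
      ∃ l : Fin m → ℝ, ((IP l y : ℝ) : EReal) - gstar l ≤ (c : EReal) := by
    intro c hc
    set H : Set ((Fin m → ℝ) × ℝ) := {p | (p.2 : EReal) ≤ g p.1} with hHdef
    have hHconv : Convex ℝ H := by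
      rintro ⟨z₁, r₁⟩ h₁ ⟨z₂, r₂⟩ h₂ A B hA hB hAB
      simp only [hHdef, Set.mem_setOf_eq] at h₁ h₂
      have hB' : B = 1 - A := by linarith
      subst hB'
      obtain ⟨s₁, hs₁⟩ := hlp_real r₁ (g z₁) h₁ (hgtop z₁)
      obtain ⟨s₂, hs₂⟩ := hlp_real r₂ (g z₂) h₂ (hgtop z₂)
      have hcc := hconc z₁ z₂ A hA (by linarith)
      rw [hs₁, hs₂, ← EReal.coe_mul, ← EReal.coe_mul, ← EReal.coe_add] at hcc
      show (((A • (z₁, r₁) + (1 - A) • (z₂, r₂) : (Fin m → ℝ) × ℝ).2 : ℝ) : EReal)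
        ≤ g ((A • (z₁, r₁) + (1 - A) • (z₂, r₂) : (Fin m → ℝ) × ℝ).1)
      have hfst : (A • (z₁, r₁) + (1 - A) • (z₂, r₂) : (Fin m → ℝ) × ℝ).1
          = A • z₁ + (1 - A) • z₂ := rfl
      have hsnd : (A • (z₁, r₁) + (1 - A) • (z₂, r₂) : (Fin m → ℝ) × ℝ).2
          = A * r₁ + (1 - A) * r₂ := rfl
      rw [hfst, hsnd]
      refine le_trans ?_ hcc
      rw [hs₁] at h₁
      rw [hs₂] at h₂
      rw [EReal.coe_le_coe_iff] at h₁ h₂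
      rw [EReal.coe_le_coe_iff]
      nlinarith
    have hHclosed : IsClosed H := by
      rw [← isOpen_compl_iff, isOpen_iff_mem_nhds]
      rintro ⟨z, r⟩ hp
      have hzr : g z < (r : EReal) := not_le.mp hp
      obtain ⟨d, hd1, hd2⟩ := EReal.exists_between_coe_real hzr
      have h1 : ∀ᶠ z' in nhds z, g z' < (d : EReal) := husc z (d : EReal) hd1
      have h2 : Set.Ioi d ∈ nhds r := Ioi_mem_nhds (EReal.coe_lt_coe_iff.mp hd2)
      rw [nhds_prod_eq]
      refine Filter.mem_of_superset (Filter.prod_mem_prod h1 h2) ?_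
      rintro ⟨z', r'⟩ ⟨hz', hr'⟩
      simp only [Set.mem_compl_iff, hHdef, Set.mem_setOf_eq, not_le]
      exact hz'.trans (EReal.coe_lt_coe_iff.2 hr')
    have hyc : ((y, c) : (Fin m → ℝ) × ℝ) ∉ H := by
      simp only [hHdef, Set.mem_setOf_eq, not_le]
      exact hc
    obtain ⟨φ, u, hHu, huyc⟩ := geometric_hahn_banach_closed_point hHconv hHclosed hyc
    set L : Fin m → ℝ := fun j => φ ((Pi.single j 1 : Fin m → ℝ), 0) with hL
    set sφ : ℝ := φ (0, 1) with hsφ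
    have hφ : ∀ (z : Fin m → ℝ) (r : ℝ), φ (z, r) = IP z L + r * sφ := by
      intro z r
      have hzz : ∑ j, z j • (Pi.single j 1 : Fin m → ℝ) = z := by
        funext k
        simp [Finset.sum_apply, Pi.single_apply]
      have hdecomp : ((z, r) : (Fin m → ℝ) × ℝ)
          = (∑ j, z j • ((Pi.single j 1 : Fin m → ℝ), (0 : ℝ))) + r • ((0 : Fin m → ℝ), (1 : ℝ)) := by
        have h1 : (∑ j, z j • ((Pi.single j 1 : Fin m → ℝ), (0 : ℝ)))
            = ((∑ j, z j • (Pi.single j 1 : Fin m → ℝ)), (0 : ℝ)) := by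
          rw [Prod.ext_iff]
          constructor
          · rw [Prod.fst_sum]
            rfl
          · rw [Prod.snd_sum]; simp
        rw [h1, hzz]
        rw [Prod.ext_iff]
        constructor
        · show z = z + r • (0 : Fin m → ℝ); simp
        · show r = 0 + r • (1 : ℝ); simp
      rw [hdecomp, map_add, map_sum, map_smul]
      simp only [map_smul, smul_eq_mul]
      simp only [IP, hL, hsφ]
    have hHu' : ∀ (z : Fin m → ℝ) (r : ℝ), (r : EReal) ≤ g z → IP z L + r * sφ < u := by
      intro z r h
      have := hHu (z, r) h
      rwa [hφ z r] at this
    have hyc' : u < IP y L + c * sφ := by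
      have := huyc
      rwa [hφ y c] at this
    have hs0 : 0 ≤ sφ := by
      by_contra hneg
      push_neg at hneg
      set tt := max 0 ((IP (ω x₀) L + f x₀ * sφ - u) / sφ) with htt
      have htt0 : 0 ≤ tt := le_max_left _ _
      have h1 : (((f x₀ - tt) : ℝ) : EReal) ≤ g (ω x₀) :=
        le_trans (EReal.coe_le_coe_iff.2 (by linarith)) (hfeas (ω x₀) x₀ hx₀ le_rfl)
      have h2 := hHu' (ω x₀) (f x₀ - tt) h1
      have h3 : (IP (ω x₀) L + f x₀ * sφ - u) / sφ ≤ tt := le_max_right _ _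
      have h4 := mul_le_mul_of_nonpos_right h3 hneg.le
      have h5 : (IP (ω x₀) L + f x₀ * sφ - u) / sφ * sφ = IP (ω x₀) L + f x₀ * sφ - u :=
        div_mul_cancel₀ _ hneg.ne
      rw [h5] at h4
      rw [sub_mul] at h2
      linarith
    rcases eq_or_lt_of_le hs0 with hs0' | hspos
    · -- sφ = 0
      have hLdom : ∀ z : Fin m → ℝ, (∃ x ∈ X, ω x ≤ z) → IP z L < u := by
        rintro z ⟨x, hxX, hxw⟩
        have := hHu' z (f x) (hfeas z x hxX hxw)
        rwa [← hs0', mul_zero, add_zero] at this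
      have hyL : u < IP y L := by
        have := hyc'
        rwa [← hs0', mul_zero, add_zero] at this
      set tc := max 1 ((IP a y + b - c) / (IP y L - u)) with htc
      have htc1 : (1 : ℝ) ≤ tc := le_max_left _ _
      have htc0 : 0 < tc := by linarith
      set l : Fin m → ℝ := fun j => a j - tc * L j with hldef
      have hβ : ∀ z, g z ≤ ((IP l z - (-(tc * u) - b) : ℝ) : EReal) := by
        intro z
        by_cases hfz : ∃ x ∈ X, ω x ≤ z
        · have h1 : g z ≤ ((IP a z + b : ℝ) : EReal) := hab z
          have h2 : IP z L < u := hLdom z hfz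
          refine h1.trans (EReal.coe_le_coe_iff.2 ?_)
          have h3 : IP l z = IP a z - tc * IP z L := IP_subt a L z tc
          nlinarith
        · rw [hgbot z hfz]; exact bot_le
      have hge := hgstar_ge l _ hβ
      refine ⟨l, hlp_sub_le (IP l y) c (gstar l) (le_trans (EReal.coe_le_coe_iff.2 ?_) hge)⟩
      have h3 : IP l y = IP a y - tc * IP y L := IP_subt a L y tc
      have h4 : (IP a y + b - c) / (IP y L - u) ≤ tc := le_max_right _ _
      have h5 : (0 : ℝ) < IP y L - u := by linarith
      rw [div_le_iff₀ h5] at h4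
      nlinarith
    · -- sφ > 0
      set l : Fin m → ℝ := fun j => -L j / sφ with hldef
      have hIPl : ∀ z, IP l z = -IP z L / sφ := fun z => IP_negdiv L z sφ
      have hβ : ∀ z, g z ≤ ((IP l z - (-(u / sφ)) : ℝ) : EReal) := by
        intro z
        apply hbound
        intro x hxX hxw
        have h2 := hHu' z (f x) (hfeas z x hxX hxw)
        have h3 : f x ≤ (u - IP z L) / sφ := (le_div_iff₀ hspos).2 (by linarith)
        have h4 : (u - IP z L) / sφ = -IP z L / sφ - -(u / sφ) := by ring
        rw [hIPl z]
        linarith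
      have hge := hgstar_ge l _ hβ
      refine ⟨l, hlp_sub_le (IP l y) c (gstar l) (le_trans (EReal.coe_le_coe_iff.2 ?_) hge)⟩
      rw [hIPl y]
      have h6 : -IP y L / sφ * sφ = -IP y L := div_mul_cancel₀ _ hspos.ne'
      have h7 : u / sφ * sφ = u := div_mul_cancel₀ _ hspos.ne'
      nlinarith
  -- global inf equals g y
  have hge : (⨅ l : Fin m → ℝ, (((IP l y : ℝ) : EReal) - gstar l)) ≤ g y := by
    refine le_of_forall_gt_imp_ge_of_dense fun d hd => ?_
    induction d using EReal.rec with
    | bot => exact absurd hd (by simp)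
    | coe c =>
        obtain ⟨l, hl⟩ := hsep c hd
        exact (iInf_le _ l).trans hl
    | top => exact le_top
  have heq2 : (⨅ l ∈ D, (((IP l y : ℝ) : EReal) - gstar l)) = g y := by
    apply le_antisymm
    · rw [hIinf]; exact hge
    · exact le_iInf₂ fun l _ => hweak l
  -- part 1 : inf over ri D equals inf over D
  have hDconv : Convex ℝ D := by
    rw [hD]
    intro l₁ h₁ l₂ h₂ A B hA hB hAB
    simp only [Set.mem_setOf_eq] at h₁ h₂ ⊢
    obtain ⟨h₁0, h₁top⟩ := h₁
    obtain ⟨h₂0, h₂top⟩ := h₂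
    obtain ⟨M₁, hM₁, -⟩ := EReal.exists_between_coe_real h₁top
    obtain ⟨M₂, hM₂, -⟩ := EReal.exists_between_coe_real h₂top
    constructor
    · intro j
      simp only [Pi.add_apply, Pi.smul_apply, smul_eq_mul, Pi.zero_apply]
      have := h₁0 j
      have := h₂0 j
      simp only [Pi.zero_apply] at *
      nlinarith
    · refine lt_of_le_of_lt (iSup₂_le fun x hx => ?_)
        (EReal.coe_lt_top (A * M₁ + B * M₂))
      have e₁ : ((f x - IP l₁ (ω x) : ℝ) : EReal) ≤ (M₁ : EReal) :=
        le_of_lt (lt_of_le_of_lt (le_iSup₂ (f := fun x _ => ((f x - IP l₁ (ω x) : ℝ) : EReal)) x hx) hM₁)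
      have e₂ : ((f x - IP l₂ (ω x) : ℝ) : EReal) ≤ (M₂ : EReal) :=
        le_of_lt (lt_of_le_of_lt (le_iSup₂ (f := fun x _ => ((f x - IP l₂ (ω x) : ℝ) : EReal)) x hx) hM₂)
      rw [EReal.coe_le_coe_iff] at e₁ e₂
      rw [EReal.coe_le_coe_iff]
      have hcombo : IP (A • l₁ + B • l₂) (ω x) = A * IP l₁ (ω x) + B * IP l₂ (ω x) :=
        IP_comb A B l₁ l₂ (ω x)
      rw [hcombo]
      have e₁' : A * (f x - IP l₁ (ω x)) ≤ A * M₁ := mul_le_mul_of_nonneg_left e₁ hA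
      have e₂' : B * (f x - IP l₂ (ω x)) ≤ B * M₂ := mul_le_mul_of_nonneg_left e₂ hB
      have hfx : A * f x + B * f x = f x := by rw [← add_mul, hAB, one_mul]
      nlinarith [e₁', e₂', hfx]
  obtain ⟨l₀, hl₀ri⟩ := hri
  have hl₀D : l₀ ∈ D := intrinsicInterior_subset hl₀ri
  have hfinD : ∀ μ ∈ D, ∃ G : ℝ, gstar μ = ((G : ℝ) : EReal) := by
    intro μ hμ
    rw [hD] at hμ
    obtain ⟨hμ0, hμtop⟩ := hμ
    obtain ⟨M, hM, -⟩ := EReal.exists_between_coe_real hμtop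
    have hlow : ((-M : ℝ) : EReal) ≤ gstar μ := by
      apply hgstar_ge
      intro z
      apply hbound
      intro x hxX hxw
      have e₁ : ((f x - IP μ (ω x) : ℝ) : EReal) ≤ (M : EReal) :=
        le_of_lt (lt_of_le_of_lt (le_iSup₂ (f := fun x _ => ((f x - IP μ (ω x) : ℝ) : EReal)) x hxX) hM)
      rw [EReal.coe_le_coe_iff] at e₁
      have e₂ : IP μ (ω x) ≤ IP μ z := IP_mono hμ0 hxw
      linarith
    have hhigh : gstar μ ≤ ((IP μ (ω x₀) - f x₀ : ℝ) : EReal) := by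
      refine (hgstar_le μ (ω x₀)).trans ?_
      rw [EReal.coe_sub]
      exact EReal.sub_le_sub le_rfl (hfeas (ω x₀) x₀ hx₀ le_rfl)
    exact hlp_real (-M) (gstar μ) hlow (hhigh.trans_lt (EReal.coe_lt_top _)).ne
  have hI1le : ∀ l ∈ D, (⨅ l ∈ intrinsicInterior ℝ D, (((IP l y : ℝ) : EReal) - gstar l))
      ≤ ((IP l y : ℝ) : EReal) - gstar l := by
    intro l hlD
    obtain ⟨G₀, hG₀⟩ := hfinD l₀ hl₀D
    obtain ⟨Gl, hGl⟩ := hfinD l hlD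
    have key : ∀ t : ℝ, 0 < t → t ≤ 1 →
        (⨅ l ∈ intrinsicInterior ℝ D, (((IP l y : ℝ) : EReal) - gstar l))
        ≤ (((IP l y - Gl) + t * ((IP l₀ y - G₀) - (IP l y - Gl)) : ℝ) : EReal) := by
      intro t ht ht1
      set μt := t • l₀ + (1 - t) • l with hμt
      have hμri : μt ∈ intrinsicInterior ℝ D := seg_ri hDconv hlD hl₀ri ht ht1
      have hcc : ((t * G₀ + (1 - t) * Gl : ℝ) : EReal) ≤ gstar μt := by
        apply hgstar_ge
        intro z
        have h1 : g z ≤ ((IP l₀ z - G₀ : ℝ) : EReal) := by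
          refine (hlp_le_sub (IP l₀ z) G₀ (g z)).1 ?_
          rw [← hG₀]
          exact hgstar_le l₀ z
        have h2 : g z ≤ ((IP l z - Gl : ℝ) : EReal) := by
          refine (hlp_le_sub (IP l z) Gl (g z)).1 ?_
          rw [← hGl]
          exact hgstar_le l z
        have h3 := hlp_comb' (g z) (IP l₀ z - G₀) (IP l z - Gl) t ht.le ht1 h1 h2 (hgtop z)
        have h4 : IP μt z - (t * G₀ + (1 - t) * Gl)
            = t * (IP l₀ z - G₀) + (1 - t) * (IP l z - Gl) := by
          rw [hμt, IP_comb]; ring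
        rw [h4]
        exact h3
      calc (⨅ l ∈ intrinsicInterior ℝ D, (((IP l y : ℝ) : EReal) - gstar l))
          ≤ ((IP μt y : ℝ) : EReal) - gstar μt := iInf₂_le μt hμri
        _ ≤ ((IP μt y : ℝ) : EReal) - ((t * G₀ + (1 - t) * Gl : ℝ) : EReal) :=
            EReal.sub_le_sub le_rfl hcc
        _ = ((IP μt y - (t * G₀ + (1 - t) * Gl) : ℝ) : EReal) := (EReal.coe_sub _ _).symm
        _ = (((IP l y - Gl) + t * ((IP l₀ y - G₀) - (IP l y - Gl)) : ℝ) : EReal) := by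
            rw [EReal.coe_eq_coe_iff]
            rw [hμt, IP_comb]
            ring
    have hterm : ((IP l y : ℝ) : EReal) - gstar l = ((IP l y - Gl : ℝ) : EReal) := by
      rw [hGl, ← EReal.coe_sub]
    rw [hterm]
    apply hlp_eps
    intro ε hε
    set K := (IP l₀ y - G₀) - (IP l y - Gl) with hK
    rcases le_or_gt K 0 with hK0 | hK0
    · refine (key 1 one_pos le_rfl).trans (EReal.coe_le_coe_iff.2 ?_)
      nlinarith
    · have htpos : 0 < min 1 (ε / K) := lt_min one_pos (div_pos hε hK0)
      refine (key (min 1 (ε / K)) htpos (min_le_left _ _)).trans (EReal.coe_le_coe_iff.2 ?_)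
      have h1 : min 1 (ε / K) ≤ ε / K := min_le_right _ _
      have h2 : min 1 (ε / K) * K ≤ ε / K * K := mul_le_mul_of_nonneg_right h1 hK0.le
      have h3 : ε / K * K = ε := div_mul_cancel₀ _ hK0.ne'
      linarith
  have hI1 : (⨅ l ∈ intrinsicInterior ℝ D, (((IP l y : ℝ) : EReal) - gstar l))
      = ⨅ l ∈ D, (((IP l y : ℝ) : EReal) - gstar l) := by
    apply le_antisymm
    · exact le_iInf₂ fun l hl => hI1le l hl
    · exact le_iInf₂ fun l hl => iInf₂_le l (intrinsicInterior_subset hl)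
  exact ⟨hI1, heq2⟩
end
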